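/- If the CGM M is finite (finitely many states and finitely many available global moves at each state) and an assertion s ⊢ ⟨⟨A⟩⟩(φ₁ U φ₂) is true, then there exist an A-strategy F and a natural number bound N such that along every play from s compliant with F, the eventuality φ₂ is realized at some position k ≤ N while φ₁ holds at all earlier positions. -/

import Mathlib

/-- A concurrent game model. -/
structure CGM (Agent State : Type) where
  Act : Type
  avail : Agent → State → Set Act
  avail_ne : ∀ a s, (avail a s).Nonempty
  out : State → (Agent → Act) → State

namespace CGM
variable {Agent State : Type} (M : CGM Agent State)

/-- A global move available at `s`. -/
def GlobalAvail (s : State) (σ : Agent → M.Act) : Prop := ∀ a, σ a ∈ M.avail a s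

/-- A play: an infinite sequence of states following transitions. -/
def IsPlay (lam : ℕ → State) : Prop :=
  ∀ i, ∃ σ, M.GlobalAvail (lam i) σ ∧ M.out (lam i) σ = lam (i + 1)

/-- The history `λ₀ … λᵢ` of a play. -/
def hist (lam : ℕ → State) (i : ℕ) : List State := (List.range (i + 1)).map lam

/-- A perfect-recall strategy for coalition `A` prescribes available moves. -/
def StratAvail (A : Set Agent) (F : List State → Agent → M.Act) : Prop :=
  ∀ (h : List State) (s : State), h.getLast? = some s → ∀ a ∈ A, F h a ∈ M.avail a s

/-- A play is compliant with the `A`-strategy `F`. -/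
def Compliant (A : Set Agent) (F : List State → Agent → M.Act) (lam : ℕ → State) : Prop :=
  ∀ i, ∃ σ, M.GlobalAvail (lam i) σ ∧ (∀ a ∈ A, σ a = F (CGM.hist lam i) a) ∧
    M.out (lam i) σ = lam (i + 1)

/-- `M,s ⊨ ⟨⟨A⟩⟩Φ` : some perfect-recall `A`-strategy makes every compliant
play from `s` satisfy the path property `Φ`. -/
def satCoal (A : Set Agent) (s : State) (Φ : (ℕ → State) → Prop) : Prop :=
  ∃ F, M.StratAvail A F ∧
    ∀ lam : ℕ → State, lam 0 = s → M.IsPlay lam → M.Compliant A F lam → Φ lam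

end CGM

/-- ATL* formulae (state and path formulae together); `coal` is `⟨⟨A⟩⟩`,
`dcoal` is `[[A]]`, `untl` is the until operator. -/
inductive Form (Agent : Type) where
  | top : Form Agent
  | atom : ℕ → Form Agent
  | neg : Form Agent → Form Agent
  | and : Form Agent → Form Agent → Form Agent
  | or : Form Agent → Form Agent → Form Agent
  | coal : Set Agent → Form Agent → Form Agent
  | dcoal : Set Agent → Form Agent → Form Agent
  | next : Form Agent → Form Agent
  | box : Form Agent → Form Agent
  | untl : Form Agent → Form Agent → Form Agent

namespace Form
variable {Agent State : Type}

mutual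
/-- ATL⁺ state formulae. -/
def isState : Form Agent → Bool
  | .top => true
  | .atom _ => true
  | .neg φ => isState φ
  | .and φ ψ => isState φ && isState ψ
  | .or φ ψ => isState φ && isState ψ
  | .coal _ Φ => isPathPlus Φ
  | .dcoal _ Φ => isPathPlus Φ
  | _ => false

/-- ATL⁺ path formulae: boolean combinations of state formulae and of
`◯φ`, `□φ`, `φ U ψ` with `φ, ψ` state formulae. -/
def isPathPlus : Form Agent → Bool
  | .top => true
  | .atom _ => true
  | .coal _A Φ => isPathPlus Φ
  | .dcoal _A Φ => isPathPlus Φ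
  | .neg Φ => isPathPlus Φ
  | .and Φ Ψ => isPathPlus Φ && isPathPlus Ψ
  | .or Φ Ψ => isPathPlus Φ && isPathPlus Ψ
  | .next φ => isState φ
  | .box φ => isState φ
  | .untl φ ψ => isState φ && isState ψ
end

/-- Path satisfaction `M,λ ⊨ Φ` (state formulae are read at `λ 0`). -/
def psat (M : CGM Agent State) (V : ℕ → State → Prop) : Form Agent → (ℕ → State) → Prop
  | .top, _ => True
  | .atom n, lam => V n (lam 0)
  | .neg φ, lam => ¬ psat M V φ lam
  | .and φ ψ, lam => psat M V φ lam ∧ psat M V ψ lam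
  | .or φ ψ, lam => psat M V φ lam ∨ psat M V ψ lam
  | .coal A Φ, lam => M.satCoal A (lam 0) (fun lam' => psat M V Φ lam')
  | .dcoal A Φ, lam => M.satCoal Aᶜ (lam 0) (fun lam' => psat M V Φ lam')
  | .next φ, lam => psat M V φ (fun j => lam (j + 1))
  | .box φ, lam => ∀ i, psat M V φ (fun j => lam (i + j))
  | .untl φ ψ, lam => ∃ i, psat M V ψ (fun j => lam (i + j)) ∧
      ∀ k < i, psat M V φ (fun j => lam (k + j))

/-- State satisfaction `M,s ⊨ φ` for state formulae. -/
def SSat (M : CGM Agent State) (V : ℕ → State → Prop) (φ : Form Agent) (s : State) : Prop :=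
  psat M V φ (fun _ => s)

/-- Number of symbols of a formula. -/
def size : Form Agent → ℕ
  | .top => 1
  | .atom _ => 1
  | .neg φ => size φ + 1
  | .and φ ψ => size φ + size ψ + 1
  | .or φ ψ => size φ + size ψ + 1
  | .untl φ ψ => size φ + size ψ + 1
  | .coal _ Φ => size Φ + 1
  | .dcoal _ Φ => size Φ + 1
  | .next Φ => size Φ + 1
  | .box Φ => size Φ + 1

def isTop : Form Agent → Bool
  | .top => true
  | _ => false

end Form

open Form

/-- The `⊗` operation on sets (lists) of pairs of formulae. -/
def otimes {Agent : Type} (l₁ l₂ : List (Form Agent × Form Agent)) :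
    List (Form Agent × Form Agent) :=
  l₁.flatMap fun p => l₂.map fun q => (p.1.and q.1, p.2.and q.2)

/-- The `⊕` operation on sets (lists) of pairs of formulae. -/
def oplus {Agent : Type} (l₁ l₂ : List (Form Agent × Form Agent)) :
    List (Form Agent × Form Agent) :=
  (l₁.filter fun p => !p.2.isTop).flatMap fun p =>
    (l₂.filter fun q => !q.2.isTop).map fun q => (p.1.and q.1, p.2.or q.2)

/-- The decomposition function `dec` on ATL⁺ path formulae. -/
def dec {Agent : Type} : Form Agent → List (Form Agent × Form Agent)
  | .next φ => [(.top, φ)]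
  | .box φ => [(φ, .box φ)]
  | .untl φ ψ => [(φ, .untl φ ψ), (ψ, .top)]
  | .and Φ₁ Φ₂ => otimes (dec Φ₁) (dec Φ₂)
  | .or Φ₁ Φ₂ => dec Φ₁ ++ dec Φ₂ ++ oplus (dec Φ₁) (dec Φ₂)
  | φ => [(φ, .top)]

/-- The γ-component of a pair `(ψ,Ψ)` for `⟨⟨A⟩⟩`. -/
def gcomp {Agent : Type} (A : Set Agent) (p : Form Agent × Form Agent) : Form Agent :=
  if p.2.isTop then p.1 else p.1.and (.coal A (.next (.coal A p.2)))

/-- The γ-component of a pair `(ψ,Ψ)` for `[[A]]`. -/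
def gcompU {Agent : Type} (A : Set Agent) (p : Form Agent × Form Agent) : Form Agent :=
  if p.2.isTop then p.1 else p.1.and (.dcoal A (.next (.dcoal A p.2)))

/-- Conjunctive normal form: a list of clauses (lists of "literals"). -/
def cnf {Agent : Type} : Form Agent → List (List (Form Agent))
  | .and φ ψ => cnf φ ++ cnf ψ
  | .or φ ψ => (cnf φ).flatMap fun c => (cnf ψ).map fun d => c ++ d
  | φ => [[φ]]

/-- Disjunction of a list of formulae. -/
def bigOr {Agent : Type} : List (Form Agent) → Form Agent
  | [] => .neg .top
  | a :: l => l.foldl .or a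

/-- γ_d-components of `⟨⟨A⟩⟩Φ` : the conjuncts (clauses) of the CNF of the
disjunction of the γ-components. -/
def gammaD {Agent : Type} (A : Set Agent) (Φ : Form Agent) : List (Form Agent) :=
  (cnf (bigOr ((dec Φ).map (gcomp A)))).map bigOr

/-- γ_d-components of `[[A]]Φ`. -/
def gammaDU {Agent : Type} (A : Set Agent) (Φ : Form Agent) : List (Form Agent) :=
  (cnf (bigOr ((dec Φ).map (gcompU A)))).map bigOr

/-- The component relation: successor, α, β and γ_d components. -/
inductive Component {Agent : Type} : Form Agent → Form Agent → Prop
  | andL (φ ψ : Form Agent) : Component (.and φ ψ) φ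
  | andR (φ ψ : Form Agent) : Component (.and φ ψ) ψ
  | orL (φ ψ : Form Agent) : Component (.or φ ψ) φ
  | orR (φ ψ : Form Agent) : Component (.or φ ψ) ψ
  | succE (A : Set Agent) (φ : Form Agent) : Component (.coal A (.next φ)) φ
  | succU (A : Set Agent) (φ : Form Agent) : Component (.dcoal A (.next φ)) φ
  | gammaE (A : Set Agent) (Φ δ : Form Agent) :
      δ ∈ gammaD A Φ → Component (.coal A Φ) δ
  | gammaU (A : Set Agent) (Φ δ : Form Agent) :
      δ ∈ gammaDU A Φ → Component (.dcoal A Φ) δ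

/-- Membership in the closure `cl φ` : least set containing `⊤` and `φ`
closed under taking components. -/
inductive InCl {Agent : Type} (φ : Form Agent) : Form Agent → Prop
  | base : InCl φ φ
  | top : InCl φ .top
  | step {ψ χ : Form Agent} : InCl φ ψ → Component ψ χ → InCl φ χ

/-! Fix a strategy `F` witnessing `⟨⟨A⟩⟩(φ₁ U φ₂)` and give the finite state space the
discrete topology, so that `ℕ → State` is compact. The plays from `s` compliant with `F` form a
closed, hence compact, set, because each defining condition inspects finitely many positions;
for the same reason the sets of plays realizing `φ₂` by position `n` are open. They increase
with `n` and cover the compliant plays, so a single one contains them all: König's lemma in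
topological form. -/

open Set

theorem Form.psat_iff_SSat_of_isState {Agent State : Type} (M : CGM Agent State)
    (V : ℕ → State → Prop) {φ : Form Agent} (hφ : φ.isState = true) (lam : ℕ → State) :
    psat M V φ lam ↔ SSat M V φ (lam 0) := by
  induction φ generalizing lam with
  | top | atom | coal | dcoal => rfl
  | neg φ ih => exact not_congr (ih hφ lam)
  | and φ ψ ihφ ihψ =>
    simp only [isState, Bool.and_eq_true] at hφ
    exact and_congr (ihφ hφ.1 lam) (ihψ hφ.2 lam)
  | or φ ψ ihφ ihψ =>
    simp only [isState, Bool.and_eq_true] at hφ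
    exact or_congr (ihφ hφ.1 lam) (ihψ hφ.2 lam)
  | next | box | untl => simp [isState] at hφ

theorem isClopen_of_dependsOn {ι : Type*} {X : ι → Type*} [∀ i, TopologicalSpace (X i)]
    [∀ i, DiscreteTopology (X i)] {S : Set (Π i, X i)} {s : Set ι} (hs : s.Finite)
    (hS : DependsOn (· ∈ S) s) : IsClopen S := by
  have := hs.to_subtype
  obtain ⟨g, hg⟩ := dependsOn_iff_exists_comp.1 hS
  have hS_eq : S = s.domRestrict ⁻¹' {y | g y} := by
    ext x
    exact iff_of_eq (congrFun hg x)
  rw [hS_eq]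
  exact (isClopen_discrete _).preimage (continuous_pi fun i => continuous_apply _)

theorem isOpen_setOf_exists_le_until {X : Type*} [TopologicalSpace X] [DiscreteTopology X]
    (P Q : X → Prop) (n : ℕ) :
    IsOpen {lam : ℕ → X | ∃ k ≤ n, Q (lam k) ∧ ∀ j < k, P (lam j)} := by
  refine (isClopen_of_dependsOn (finite_Iic n) fun x y hxy => ?_).isOpen
  have hxy' : ∀ k ≤ n, x k = y k := hxy
  refine propext (exists_congr fun k => and_congr_right fun hk => ?_)
  rw [hxy' k hk]
  exact and_congr_right' (forall₂_congr fun j hj => by rw [hxy' j (by omega)])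

namespace CGM

variable {Agent State : Type} (M : CGM Agent State)

theorem hist_congr {x y : ℕ → State} {i : ℕ} (h : ∀ j ≤ i, x j = y j) :
    hist x i = hist y i :=
  List.map_congr_left fun j hj => h j (Nat.lt_succ_iff.1 (List.mem_range.1 hj))

variable [TopologicalSpace State] [DiscreteTopology State]

theorem isClosed_setOf_isPlay : IsClosed {lam : ℕ → State | M.IsPlay lam} := by
  have hstep : ∀ i, IsClosed {lam : ℕ → State |
      ∃ σ, M.GlobalAvail (lam i) σ ∧ M.out (lam i) σ = lam (i + 1)} := fun i =>
    (isClopen_of_dependsOn (finite_Iic (i + 1)) fun x y hxy => by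
      have hxy' : ∀ j ≤ i + 1, x j = y j := hxy
      simp only [mem_ofPred_eq, hxy' i (by omega), hxy' (i + 1) le_rfl]).isClosed
  simpa only [IsPlay, ofPred_forall] using isClosed_iInter hstep

theorem isClosed_setOf_compliant (A : Set Agent) (F : List State → Agent → M.Act) :
    IsClosed {lam : ℕ → State | M.Compliant A F lam} := by
  have hstep : ∀ i, IsClosed {lam : ℕ → State | ∃ σ, M.GlobalAvail (lam i) σ ∧
      (∀ a ∈ A, σ a = F (hist lam i) a) ∧ M.out (lam i) σ = lam (i + 1)} := fun i =>
    (isClopen_of_dependsOn (finite_Iic (i + 1)) fun x y hxy => by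
      have hxy' : ∀ j ≤ i + 1, x j = y j := hxy
      have hhist : hist x i = hist y i := hist_congr fun j hj => hxy' j (by omega)
      simp only [mem_ofPred_eq, hxy' i (by omega), hxy' (i + 1) le_rfl, hhist]).isClosed
  simpa only [Compliant, ofPred_forall] using isClosed_iInter hstep

end CGM

/-- in a finite CGM (finitely many states, finitely many available
global moves at each state), if `s ⊢ ⟨⟨A⟩⟩(φ₁ U φ₂)` is true then some `A`-strategy
`F` realizes the eventuality `φ₂` within a uniform bound `N` along every compliant
play from `s`, with `φ₁` holding at all earlier positions. -/
theorem until_uniform_bound {Agent State : Type} [Finite State]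
    (M : CGM Agent State)
    (hfb : ∀ s : State, {σ : Agent → M.Act | M.GlobalAvail s σ}.Finite)
    (V : ℕ → State → Prop) (A : Set Agent) (φ₁ φ₂ : Form Agent)
    (h1 : φ₁.isState = true) (h2 : φ₂.isState = true) (s : State)
    (h : Form.SSat M V (.coal A (.untl φ₁ φ₂)) s) :
    ∃ (F : List State → Agent → M.Act) (N : ℕ), M.StratAvail A F ∧
      ∀ lam : ℕ → State, lam 0 = s → M.IsPlay lam → M.Compliant A F lam →
        ∃ k ≤ N, Form.SSat M V φ₂ (lam k) ∧ ∀ j < k, Form.SSat M V φ₁ (lam j) := by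
  let _ : TopologicalSpace State := ⊥
  have : DiscreteTopology State := ⟨rfl⟩
  obtain ⟨F, hF, hwin⟩ := h
  let plays := {lam : ℕ → State | lam 0 = s ∧ M.IsPlay lam ∧ M.Compliant A F lam}
  let within (n : ℕ) := {lam : ℕ → State |
    ∃ k ≤ n, Form.SSat M V φ₂ (lam k) ∧ ∀ j < k, Form.SSat M V φ₁ (lam j)}
  have hplays : IsCompact plays :=
    ((isClosed_eq (continuous_apply 0) continuous_const).inter
      ((M.isClosed_setOf_isPlay).inter (M.isClosed_setOf_compliant A F))).isCompact
  have hmono : Monotone within := fun m n hmn lam ⟨k, hk, hrest⟩ => ⟨k, hk.trans hmn, hrest⟩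
  have hcover : plays ⊆ ⋃ n, within n := by
    rintro lam ⟨h0, hplay, hcomp⟩
    obtain ⟨k, hk2, hk1⟩ := hwin lam h0 hplay hcomp
    exact mem_iUnion.2 ⟨k, k, le_rfl, (psat_iff_SSat_of_isState M V h2 _).1 hk2,
      fun j hj => (psat_iff_SSat_of_isState M V h1 _).1 (hk1 j hj)⟩
  obtain ⟨N, hN⟩ := hplays.elim_directed_cover within
    (isOpen_setOf_exists_le_until _ _) hcover hmono.directed_le
  exact ⟨F, N, hF, fun lam h0 hplay hcomp => hN ⟨h0, hplay, hcomp⟩⟩
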